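/- arXiv:2210.00309 — 2 statements merged into one kernel-verified Lean document; each statement's English description precedes it below -/
import Mathlib

section
/- (Zero-free region for the de Branges function.) Let z ∈ ℂ with Im z ≤ 0, let T > 0 with T |Im z| ≤ 1, let f be locally integrable on [0, T], and let G, H : [0, T] → ℂ be differentiable functions solving the Dirac-type system G'(t) = -i z G(t) + conj(f(t)) H(t), H'(t) = i z H(t) + f(t) G(t), with G(0) = H(0) = 1 and |G(t)| ≤ |H(t)| for all t ∈ [0, T]. If G(T) = 0, then (∫_0^T |f(s)| ds) · exp(∫_0^T |f(s)| ds) ≥ e^{−2}; in particular, if ∫_0^T |f(s)| ds ≤ 1/10 then G(T) ≠ 0, i.e. E(T, ·) has no zero z with |Im z| ≤ 1/T in the closed lower half-plane. -/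
/-!
Gauge away the free oscillation: `g = e^{izt} G` and `h = e^{-izt} H` satisfy
`g' = e^{izt} conj(f) H` and `h' = e^{-izt} f G`. The Hermite–Biehler inequality `|G| ≤ |H|` gives
`|h'| ≤ |f| |h|`, so a Grönwall argument bounds `|h| ≤ e^A` with `A = ∫₀ᵀ |f|`. Then
`|g'| = |e^{izt}|² |f| |h| ≤ e² e^A |f|` because `t |Im z| ≤ 1`, and `G(T) = 0` forces
`1 = |g(T) - g(0)| ≤ e² e^A A`.
-/

open MeasureTheory Complex Set Filter Topology

-- The `ε` keeps the logarithm defined where `u` vanishes.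
theorem log_norm_sq_add_sub_le_two_mul_integral {E : Type*} [NormedAddCommGroup E]
    [InnerProductSpace ℝ E] {u u' : ℝ → E} {k : ℝ → ℝ} {a b ε : ℝ} (hab : a ≤ b) (hε : 0 < ε)
    (hu : ∀ t ∈ Icc a b, HasDerivAt u (u' t) t) (hk : IntegrableOn k (Icc a b))
    (hk0 : ∀ t ∈ Icc a b, 0 ≤ k t) (hu' : ∀ t ∈ Icc a b, ‖u' t‖ ≤ k t * ‖u t‖) :
    Real.log (‖u b‖ ^ 2 + ε) - Real.log (‖u a‖ ^ 2 + ε) ≤ 2 * ∫ t in a..b, k t := by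
  have hpos : ∀ t, 0 < ‖u t‖ ^ 2 + ε := fun t => by positivity
  rw [← intervalIntegral.integral_const_mul]
  refine intervalIntegral.sub_le_integral_of_hasDeriv_right_of_le hab
    (fun t ht => ((hu t ht).norm_sq.add_const ε).log (hpos t).ne' |>.continuousAt
      |>.continuousWithinAt)
    (fun t ht => (((hu t (Ioo_subset_Icc_self ht)).norm_sq.add_const ε).log
      (hpos t).ne').hasDerivWithinAt) (hk.const_mul 2) (fun t ht => ?_)
  have ht := Ioo_subset_Icc_self ht
  rw [div_le_iff₀ (hpos t)]
  calc 2 * inner ℝ (u t) (u' t) ≤ 2 * (‖u t‖ * ‖u' t‖) := by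
        gcongr; exact real_inner_le_norm _ _
    _ ≤ 2 * (‖u t‖ * (k t * ‖u t‖)) := by gcongr; exact hu' t ht
    _ ≤ 2 * k t * (‖u t‖ ^ 2 + ε) := by nlinarith [hk0 t ht]

theorem norm_le_mul_exp_integral_of_norm_deriv_le {E : Type*} [NormedAddCommGroup E]
    [InnerProductSpace ℝ E] {u u' : ℝ → E} {k : ℝ → ℝ} {a b : ℝ} (hab : a ≤ b)
    (hu : ∀ t ∈ Icc a b, HasDerivAt u (u' t) t) (hk : IntegrableOn k (Icc a b))
    (hk0 : ∀ t ∈ Icc a b, 0 ≤ k t) (hu' : ∀ t ∈ Icc a b, ‖u' t‖ ≤ k t * ‖u t‖) :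
    ‖u b‖ ≤ ‖u a‖ * Real.exp (∫ t in a..b, k t) := by
  set K := ∫ t in a..b, k t
  have hε : ∀ ε > 0, ‖u b‖ ^ 2 + ε ≤ (‖u a‖ ^ 2 + ε) * Real.exp (2 * K) := fun ε hε => by
    have hpos : ∀ t, 0 < ‖u t‖ ^ 2 + ε := fun t => by positivity
    rw [← Real.log_le_log_iff (hpos b) (by positivity), Real.log_mul (hpos a).ne'
      (Real.exp_pos _).ne', Real.log_exp, ← sub_le_iff_le_add']
    exact log_norm_sq_add_sub_le_two_mul_integral hab hε hu hk hk0 hu'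
  have hlim : ‖u b‖ ^ 2 + 0 ≤ (‖u a‖ ^ 2 + 0) * Real.exp (2 * K) :=
    le_of_tendsto_of_tendsto
      ((Continuous.tendsto (by fun_prop) 0).mono_left nhdsWithin_le_nhds)
      ((Continuous.tendsto (by fun_prop) 0).mono_left nhdsWithin_le_nhds)
      (eventually_nhdsWithin_of_forall (s := Ioi 0) hε)
  have hsq : ‖u b‖ ^ 2 ≤ (‖u a‖ * Real.exp K) ^ 2 := by
    rw [mul_pow, ← Real.exp_nat_mul]; simpa using hlim
  exact (pow_le_pow_iff_left₀ (norm_nonneg _) (by positivity) two_ne_zero).mp hsq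

theorem norm_le_mul_exp_integral_of_norm_deriv_le_of_mem_Icc {E : Type*} [NormedAddCommGroup E]
    [InnerProductSpace ℝ E] {u u' : ℝ → E} {k : ℝ → ℝ} {a b : ℝ}
    (hu : ∀ t ∈ Icc a b, HasDerivAt u (u' t) t) (hk : IntegrableOn k (Icc a b))
    (hk0 : ∀ t ∈ Icc a b, 0 ≤ k t) (hu' : ∀ t ∈ Icc a b, ‖u' t‖ ≤ k t * ‖u t‖)
    {t : ℝ} (ht : t ∈ Icc a b) :
    ‖u t‖ ≤ ‖u a‖ * Real.exp (∫ s in a..b, k s) := by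
  have hsub : Icc a t ⊆ Icc a b := Icc_subset_Icc_right ht.2
  calc ‖u t‖ ≤ ‖u a‖ * Real.exp (∫ s in a..t, k s) :=
        norm_le_mul_exp_integral_of_norm_deriv_le ht.1 (fun s hs => hu s (hsub hs))
          (hk.mono_set hsub) (fun s hs => hk0 s (hsub hs)) (fun s hs => hu' s (hsub hs))
    _ ≤ ‖u a‖ * Real.exp (∫ s in a..b, k s) := by
        gcongr
        refine intervalIntegral.integral_mono_interval le_rfl ht.1 ht.2 ?_
          ((intervalIntegrable_iff_integrableOn_Icc_of_le (ht.1.trans ht.2)).2 hk)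
        exact (ae_restrict_iff' measurableSet_Ioc).2
          (.of_forall fun s hs => hk0 s (Ioc_subset_Icc_self hs))

theorem HasDerivAt.cexp_mul_ofReal_mul {F : ℝ → ℂ} {F' : ℂ} {t : ℝ} (c : ℂ)
    (hF : HasDerivAt F F' t) :
    HasDerivAt (fun s : ℝ => cexp (c * s) * F s) (cexp (c * t) * (c * F t + F')) t := by
  have hlin : HasDerivAt (fun s : ℝ => c * s) c t := by
    simpa using (hasDerivAt_id (t : ℂ)).comp_ofReal.const_mul c
  exact (hlin.cexp.mul hF).congr_deriv (by ring)

theorem norm_cexp_neg_mul_le_exp_integral_norm {z : ℂ} {T : ℝ} {f G H : ℝ → ℂ}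
    (hf : IntegrableOn f (Icc 0 T))
    (hH : ∀ t ∈ Icc (0:ℝ) T, HasDerivAt H (I * z * H t + f t * G t) t)
    (hH0 : H 0 = 1) (hHB : ∀ t ∈ Icc (0:ℝ) T, ‖G t‖ ≤ ‖H t‖) {t : ℝ} (ht : t ∈ Icc 0 T) :
    ‖cexp (-(I * z) * t) * H t‖ ≤ Real.exp (∫ s in (0:ℝ)..T, ‖f s‖) := by
  have hu : ∀ s ∈ Icc (0:ℝ) T, HasDerivAt (fun s : ℝ => cexp (-(I * z) * s) * H s)
      (cexp (-(I * z) * s) * (f s * G s)) s := fun s hs =>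
    ((hH s hs).cexp_mul_ofReal_mul _).congr_deriv (by ring)
  have hu' : ∀ s ∈ Icc (0:ℝ) T, ‖cexp (-(I * z) * s) * (f s * G s)‖
      ≤ ‖f s‖ * ‖cexp (-(I * z) * s) * H s‖ := fun s hs => by
    simp only [norm_mul]
    calc ‖cexp (-(I * z) * s)‖ * (‖f s‖ * ‖G s‖)
        ≤ ‖cexp (-(I * z) * s)‖ * (‖f s‖ * ‖H s‖) := by gcongr; exact hHB s hs
      _ = ‖f s‖ * (‖cexp (-(I * z) * s)‖ * ‖H s‖) := by ring
  simpa [hH0] using norm_le_mul_exp_integral_of_norm_deriv_le_of_mem_Icc hu hf.norm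
    (fun s _ => norm_nonneg (f s)) hu' ht

theorem exp_neg_two_le_integral_norm_mul_exp_of_eq_zero {z : ℂ} {T : ℝ} {f G H : ℝ → ℂ}
    (hT : 0 ≤ T) (hTz : T * |z.im| ≤ 1) (hf : IntegrableOn f (Icc 0 T))
    (hG : ∀ t ∈ Icc (0:ℝ) T, HasDerivAt G (-I * z * G t + (starRingEnd ℂ) (f t) * H t) t)
    (hH : ∀ t ∈ Icc (0:ℝ) T, HasDerivAt H (I * z * H t + f t * G t) t)
    (hG0 : G 0 = 1) (hH0 : H 0 = 1) (hHB : ∀ t ∈ Icc (0:ℝ) T, ‖G t‖ ≤ ‖H t‖) (hGT : G T = 0) :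
    Real.exp (-2) ≤ (∫ s in (0:ℝ)..T, ‖f s‖) * Real.exp (∫ s in (0:ℝ)..T, ‖f s‖) := by
  set A := ∫ s in (0:ℝ)..T, ‖f s‖
  set g' : ℝ → ℂ := fun s => cexp (I * z * s) * ((starRingEnd ℂ) (f s) * H s)
  have hg : ∀ s ∈ Icc (0:ℝ) T, HasDerivAt (fun s : ℝ => cexp (I * z * s) * G s) (g' s) s :=
    fun s hs => ((hG s hs).cexp_mul_ofReal_mul _).congr_deriv (by ring)
  have hg' : ∀ s ∈ Icc (0:ℝ) T, ‖g' s‖ ≤ Real.exp 2 * Real.exp A * ‖f s‖ := fun s hs => by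
    have hH_norm : ‖H s‖ = ‖cexp (I * z * s)‖ * ‖cexp (-(I * z) * s) * H s‖ := by
      rw [← norm_mul, ← mul_assoc, ← Complex.exp_add]; simp
    have hexp : ‖cexp (I * z * s)‖ ≤ Real.exp 1 := by
      rw [norm_exp, re_mul_ofReal, Real.exp_le_exp]
      simp only [mul_re, I_re, I_im, zero_mul, one_mul, zero_sub]
      nlinarith [neg_abs_le z.im, hs.1, hs.2, abs_nonneg z.im]
    have hh := norm_cexp_neg_mul_le_exp_integral_norm hf hH hH0 hHB hs
    calc ‖g' s‖ = ‖cexp (I * z * s)‖ * ‖f s‖ * ‖H s‖ := by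
          simp only [g', norm_mul, Complex.norm_conj, mul_assoc]
      _ = ‖cexp (I * z * s)‖ * ‖cexp (I * z * s)‖ * ‖cexp (-(I * z) * s) * H s‖ * ‖f s‖ := by
          rw [hH_norm]; ring
      _ ≤ Real.exp 1 * Real.exp 1 * Real.exp A * ‖f s‖ := by gcongr
      _ = Real.exp 2 * Real.exp A * ‖f s‖ := by rw [← Real.exp_add]; norm_num
  have hdisp : ‖(cexp (I * z * T) * G T) - cexp (I * z * (0:ℝ)) * G 0‖
      ≤ ∫ s in (0:ℝ)..T, Real.exp 2 * Real.exp A * ‖f s‖ := by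
    refine norm_sub_le_integral_of_norm_deriv_le_of_le hT
      (fun s hs => (hg s hs).continuousAt.continuousWithinAt)
      (fun s hs => (hg s (Ioo_subset_Icc_self hs)).differentiableAt.differentiableWithinAt)
      (.of_forall fun s hs => ?_)
      ((intervalIntegrable_iff_integrableOn_Icc_of_le hT).2 (hf.norm.const_mul _))
    rw [(hg s (Ioo_subset_Icc_self hs)).deriv]
    exact hg' s (Ioo_subset_Icc_self hs)
  rw [hGT, hG0, intervalIntegral.integral_const_mul] at hdisp
  simp only [mul_zero, ofReal_zero, exp_zero, mul_one, zero_sub, norm_neg, norm_one] at hdisp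
  calc Real.exp (-2) ≤ Real.exp (-2) * (Real.exp 2 * Real.exp A * A) :=
        le_mul_of_one_le_right (Real.exp_pos _).le hdisp
    _ = Real.exp (-2 + 2) * (A * Real.exp A) := by rw [Real.exp_add]; ring
    _ = A * Real.exp A := by norm_num

theorem one_div_ten_mul_exp_one_div_ten_lt_exp_neg_two :
    1 / 10 * Real.exp (1 / 10) < Real.exp (-2) := by
  have hsmall : Real.exp (1 / 10) ≤ 10 / 9 :=
    (Real.exp_bound_div_one_sub_of_interval (by norm_num) (by norm_num)).trans_eq
      (by norm_num)
  have htwo : Real.exp 2 < 9 := by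
    have : Real.exp 2 = Real.exp 1 * Real.exp 1 := by rw [← Real.exp_add]; norm_num
    nlinarith [Real.exp_one_lt_d9, Real.exp_pos 1]
  have hinv : Real.exp (-2) * Real.exp 2 = 1 := by rw [← Real.exp_add]; norm_num
  nlinarith [Real.exp_pos (-2)]

theorem zero_free_region_for_E_general
    (z : ℂ) (T : ℝ) (hT : 0 < T) (hTz : T * |z.im| ≤ 1)
    (f G H : ℝ → ℂ)
    (hf : LocallyIntegrableOn f (Set.Icc 0 T))
    (hG : ∀ t ∈ Set.Icc (0:ℝ) T,
      HasDerivAt G (-Complex.I * z * G t + (starRingEnd ℂ) (f t) * H t) t)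
    (hH : ∀ t ∈ Set.Icc (0:ℝ) T,
      HasDerivAt H (Complex.I * z * H t + f t * G t) t)
    (hG0 : G 0 = 1) (hH0 : H 0 = 1)
    (hHB : ∀ t ∈ Set.Icc (0:ℝ) T, ‖G t‖ ≤ ‖H t‖) :
    (G T = 0 →
      Real.exp (-2) ≤ (∫ s in (0:ℝ)..T, ‖f s‖) *
        Real.exp (∫ s in (0:ℝ)..T, ‖f s‖)) ∧
    ((∫ s in (0:ℝ)..T, ‖f s‖) ≤ 1/10 → G T ≠ 0) := by
  have hlower := exp_neg_two_le_integral_norm_mul_exp_of_eq_zero hT.le hTz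
    (hf.integrableOn_isCompact isCompact_Icc) hG hH hG0 hH0 hHB
  refine ⟨hlower, fun hsmall hGT => (hlower hGT).not_gt ?_⟩
  have hA : 0 ≤ ∫ s in (0:ℝ)..T, ‖f s‖ :=
    intervalIntegral.integral_nonneg hT.le fun s _ => norm_nonneg (f s)
  calc (∫ s in (0:ℝ)..T, ‖f s‖) * Real.exp (∫ s in (0:ℝ)..T, ‖f s‖)
      ≤ 1 / 10 * Real.exp (1 / 10) := by gcongr
    _ < Real.exp (-2) := one_div_ten_mul_exp_one_div_ten_lt_exp_neg_two

/-- zero-free region for the de Branges function: if `E(T,z) = G(T) = 0`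
for a point `z` of the closed lower half-plane with `T|Im z| ≤ 1`, then the `L¹` norm of
the potential cannot be small; in particular `∫₀ᵀ |f| ≤ 1/10` forces `G(T) ≠ 0`. -/
theorem zero_free_region_for_E
    (z : ℂ) (hz : z.im ≤ 0) (T : ℝ) (hT : 0 < T) (hTz : T * |z.im| ≤ 1)
    (f G H : ℝ → ℂ)
    (hf : LocallyIntegrableOn f (Set.Icc 0 T))
    (hG : ∀ t ∈ Set.Icc (0:ℝ) T,
      HasDerivAt G (-Complex.I * z * G t + (starRingEnd ℂ) (f t) * H t) t)
    (hH : ∀ t ∈ Set.Icc (0:ℝ) T,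
      HasDerivAt H (Complex.I * z * H t + f t * G t) t)
    (hG0 : G 0 = 1) (hH0 : H 0 = 1)
    (hHB : ∀ t ∈ Set.Icc (0:ℝ) T, ‖G t‖ ≤ ‖H t‖) :
    (G T = 0 →
      Real.exp (-2) ≤ (∫ s in (0:ℝ)..T, ‖f s‖) *
        Real.exp (∫ s in (0:ℝ)..T, ‖f s‖)) ∧
    ((∫ s in (0:ℝ)..T, ‖f s‖) ≤ 1/10 → G T ≠ 0) :=
  zero_free_region_for_E_general z T hT hTz f G H hf hG hH hG0 hH0 hHB
end

section
/- (A priori bounds for the nonlinear Fourier transform data.) Let x ∈ ℝ, let f : [0,∞) → ℂ be locally integrable, and let a, b : [0,∞) → ℂ be differentiable functions satisfying a'(t) = e^{2ixt} conj(f(t)) conj(b(t)), b'(t) = e^{2ixt} conj(f(t)) conj(a(t)), with a(0) = 1 and b(0) = 0. Then for every t ≥ 0, writing F(t) := ∫_0^t |f(s)| ds, one has |b(t)| ≤ sinh(F(t)) and |a(t) − 1| ≤ cosh(F(t)) − 1. -/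
/-!
Write `A = ‖a - 1‖`, `B = ‖b‖` and `F = ∫₀ᵗ ‖f‖`. Integrating the system gives
`A ≤ ∫ ‖f‖ B` and `B ≤ ∫ ‖f‖ ‖a‖ ≤ ∫ ‖f‖ (1 + A)`, while `(cosh F - 1, sinh F)` solves the
same integral relations with equality. Hence `φ = max (B - sinh F) (A - (cosh F - 1))` satisfies
`φ ≤ ∫ ‖f‖ φ`, and iterating this from a bound `|φ| ≤ M` gives `φ ≤ M F ^ n / n!` for every `n`,
so `φ ≤ 0`.
Since `f` is only locally integrable, the chain rule for `F` is the one for absolutely continuous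
functions.
-/

open MeasureTheory Set Filter Topology

theorem LipschitzOnWith.comp_absolutelyContinuousOnInterval {X Y : Type*} [PseudoMetricSpace X]
    [PseudoMetricSpace Y] {φ : X → Y} {G : ℝ → X} {K : NNReal} {s : Set X} {a b : ℝ}
    (hφ : LipschitzOnWith K φ s) (hG : AbsolutelyContinuousOnInterval G a b)
    (hGs : MapsTo G (uIcc a b) s) : AbsolutelyContinuousOnInterval (φ ∘ G) a b := by
  have hKG := Tendsto.const_mul (K : ℝ) hG
  rw [mul_zero] at hKG
  refine squeeze_zero' (.of_forall fun _ => Finset.sum_nonneg fun _ _ => dist_nonneg) ?_ hKG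
  rw [eventually_inf_principal]
  filter_upwards with E hE
  rw [Finset.mul_sum]
  gcongr with i hi
  exact hφ.dist_le_mul _ (hGs (hE.1 i hi).1) _ (hGs (hE.1 i hi).2)

theorem integral_mul_deriv_comp_primitive {g φ φ' : ℝ → ℝ} {a b : ℝ}
    (hg : IntervalIntegrable g volume a b) (hφ : ∀ y, HasDerivAt φ (φ' y) y)
    (hφ' : Continuous φ') :
    ∫ s in a..b, g s * φ' (∫ v in a..s, g v) = φ (∫ v in a..b, g v) - φ 0 := by
  set G : ℝ → ℝ := fun s => ∫ v in a..s, g v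
  have hG : AbsolutelyContinuousOnInterval G a b :=
    hg.absolutelyContinuousOnInterval_intervalIntegral left_mem_uIcc
  obtain ⟨R, hR⟩ := hG.exists_bound
  have hφC1 : ContDiff ℝ 1 φ := by
    rw [contDiff_one_iff_deriv, show deriv φ = φ' from funext fun y => (hφ y).deriv]
    exact ⟨fun y => (hφ y).differentiableAt, hφ'⟩
  obtain ⟨K, hK⟩ := hφC1.contDiffOn.exists_lipschitzOnWith (s := Metric.closedBall 0 R)
    one_ne_zero (convex_closedBall 0 R) (isCompact_closedBall 0 R)
  have hφG : AbsolutelyContinuousOnInterval (φ ∘ G) a b :=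
    hK.comp_absolutelyContinuousOnInterval hG fun x hx => mem_closedBall_zero_iff.2 (hR x hx)
  rw [show φ (∫ v in a..b, g v) - φ 0 = (φ ∘ G) b - (φ ∘ G) a by simp [G],
    ← hφG.integral_deriv_eq_sub]
  refine intervalIntegral.integral_congr_ae ?_
  filter_upwards [hg.ae_hasDerivAt_integral] with s hs hsab
  rw [mul_comm, ((hφ (G s)).comp s (hs (uIoc_subset_uIcc hsab) a left_mem_uIcc)).deriv]

theorem IntervalIntegrable.mul_continuousOn_of_mem_Icc {g h : ℝ → ℝ} {a T t : ℝ}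
    (hg : IntervalIntegrable g volume a T) (hh : ContinuousOn h (Icc a T)) (ht : t ∈ Icc a T) :
    IntervalIntegrable (fun s => g s * h s) volume a t := by
  refine (hg.mono_set (uIcc_subset_uIcc_left (Icc_subset_uIcc ht))).mul_continuousOn (hh.mono ?_)
  rw [uIcc_of_le ht.1]
  exact Icc_subset_Icc_right ht.2

theorem sinh_integral_eq_integral_mul_cosh {g : ℝ → ℝ} {a b : ℝ}
    (hg : IntervalIntegrable g volume a b) :
    Real.sinh (∫ s in a..b, g s) = ∫ s in a..b, g s * Real.cosh (∫ v in a..s, g v) := by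
  rw [integral_mul_deriv_comp_primitive hg Real.hasDerivAt_sinh Real.continuous_cosh,
    Real.sinh_zero, sub_zero]

theorem cosh_integral_sub_one_eq_integral_mul_sinh {g : ℝ → ℝ} {a b : ℝ}
    (hg : IntervalIntegrable g volume a b) :
    Real.cosh (∫ s in a..b, g s) - 1 = ∫ s in a..b, g s * Real.sinh (∫ v in a..s, g v) := by
  rw [integral_mul_deriv_comp_primitive hg Real.hasDerivAt_cosh Real.continuous_sinh,
    Real.cosh_zero]

theorem nonpos_of_le_integral_mul_self {g φ : ℝ → ℝ} {T : ℝ}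
    (hg : IntervalIntegrable g volume 0 T) (hg0 : ∀ s, 0 ≤ g s) (hφ : ContinuousOn φ (Icc 0 T))
    (hle : ∀ t ∈ Icc 0 T, φ t ≤ ∫ s in 0..t, g s * φ s) : ∀ t ∈ Icc 0 T, φ t ≤ 0 := by
  set G : ℝ → ℝ := fun t => ∫ s in 0..t, g s
  have hG : ContinuousOn G (Icc 0 T) :=
    (intervalIntegral.continuousOn_primitive_interval' hg left_mem_uIcc).mono Icc_subset_uIcc
  obtain ⟨M, hM⟩ := isCompact_Icc.exists_bound_of_continuousOn hφ
  have hpow : ∀ n : ℕ, ∀ t ∈ Icc 0 T, φ t ≤ M / n.factorial * G t ^ n := by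
    intro n
    induction n with
    | zero => intro t ht; simpa using (le_abs_self _).trans (hM t ht)
    | succ n ih =>
      intro t ht
      calc φ t ≤ ∫ s in 0..t, g s * φ s := hle t ht
        _ ≤ ∫ s in 0..t, M / n.factorial * (g s * G s ^ n) := by
          refine intervalIntegral.integral_mono_on ht.1 (hg.mul_continuousOn_of_mem_Icc hφ ht)
            ((hg.mul_continuousOn_of_mem_Icc (hG.pow n) ht).const_mul _) fun s hs => ?_
          rw [mul_left_comm]
          exact mul_le_mul_of_nonneg_left (ih s ⟨hs.1, hs.2.trans ht.2⟩) (hg0 s)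
        _ = M / (n + 1).factorial * G t ^ (n + 1) := by
          have hpow_deriv (y : ℝ) : HasDerivAt (fun y : ℝ => y ^ (n + 1) / (n + 1)) (y ^ n) y := by
            refine ((hasDerivAt_pow (n + 1) y).div_const (n + 1 : ℝ)).congr_deriv ?_
            push_cast
            field_simp
          rw [intervalIntegral.integral_const_mul,
            integral_mul_deriv_comp_primitive (hg.mono_set (uIcc_subset_uIcc_left
              (Icc_subset_uIcc ht))) hpow_deriv (continuous_pow n),
            Nat.factorial_succ]
          push_cast
          field_simp
          simp [G]
  intro t ht
  have hlim : Tendsto (fun n : ℕ => M / n.factorial * G t ^ n) atTop (𝓝 0) := by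
    simpa [div_mul_eq_mul_div, mul_div_assoc] using
      (FloorSemiring.tendsto_pow_div_factorial_atTop (G t)).const_mul M
  exact ge_of_tendsto' hlim fun n => hpow n t ht

theorem le_sinh_and_le_cosh_sub_one_of_le_integral {g A B C : ℝ → ℝ} {T : ℝ}
    (hg : IntervalIntegrable g volume 0 T) (hg0 : ∀ s, 0 ≤ g s)
    (hA : ContinuousOn A (Icc 0 T)) (hB : ContinuousOn B (Icc 0 T))
    (hC : ContinuousOn C (Icc 0 T)) (hCA : ∀ s, C s ≤ 1 + A s)
    (hAB : ∀ t ∈ Icc 0 T, A t ≤ ∫ s in 0..t, g s * B s)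
    (hBC : ∀ t ∈ Icc 0 T, B t ≤ ∫ s in 0..t, g s * C s) :
    ∀ t ∈ Icc 0 T,
      B t ≤ Real.sinh (∫ s in 0..t, g s) ∧ A t ≤ Real.cosh (∫ s in 0..t, g s) - 1 := by
  set G : ℝ → ℝ := fun t => ∫ s in 0..t, g s
  have hg_on (t : ℝ) (ht : t ∈ Icc 0 T) : IntervalIntegrable g volume 0 t :=
    hg.mono_set (uIcc_subset_uIcc_left (Icc_subset_uIcc ht))
  have hG : ContinuousOn G (Icc 0 T) :=
    (intervalIntegral.continuousOn_primitive_interval' hg left_mem_uIcc).mono Icc_subset_uIcc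
  have hsinhG : ContinuousOn (fun s => Real.sinh (G s)) (Icc 0 T) :=
    Real.continuous_sinh.comp_continuousOn hG
  have hcoshG : ContinuousOn (fun s => Real.cosh (G s)) (Icc 0 T) :=
    Real.continuous_cosh.comp_continuousOn hG
  set φ : ℝ → ℝ := fun t => max (B t - Real.sinh (G t)) (A t - (Real.cosh (G t) - 1))
  have hφ : ContinuousOn φ (Icc 0 T) :=
    (hB.sub hsinhG).sup (hA.sub (hcoshG.sub continuousOn_const))
  have hφ_le : ∀ t ∈ Icc 0 T, φ t ≤ ∫ s in 0..t, g s * φ s := by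
    intro t ht
    have hle_φ {h₁ h₂ : ℝ → ℝ} (hh₁ : ContinuousOn h₁ (Icc 0 T))
        (hh₂ : ContinuousOn h₂ (Icc 0 T)) (hφ₁₂ : ∀ s, h₁ s - h₂ s ≤ φ s) :
        (∫ s in 0..t, g s * h₁ s) - ∫ s in 0..t, g s * h₂ s ≤ ∫ s in 0..t, g s * φ s := by
      have hi₁ := hg.mul_continuousOn_of_mem_Icc hh₁ ht
      have hi₂ := hg.mul_continuousOn_of_mem_Icc hh₂ ht
      rw [← intervalIntegral.integral_sub hi₁ hi₂]
      refine intervalIntegral.integral_mono_on ht.1 (hi₁.sub hi₂)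
        (hg.mul_continuousOn_of_mem_Icc hφ ht) fun s _ => ?_
      rw [← mul_sub]
      exact mul_le_mul_of_nonneg_left (hφ₁₂ s) (hg0 s)
    refine max_le ?_ ?_
    · rw [sinh_integral_eq_integral_mul_cosh (hg_on t ht)]
      refine (sub_le_sub_right (hBC t ht) _).trans (hle_φ hC hcoshG fun s => ?_)
      linarith [hCA s, le_max_right (B s - Real.sinh (G s)) (A s - (Real.cosh (G s) - 1))]
    · rw [cosh_integral_sub_one_eq_integral_mul_sinh (hg_on t ht)]
      exact (sub_le_sub_right (hAB t ht) _).trans (hle_φ hB hsinhG fun s => le_max_left _ _)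
  intro t ht
  have h := max_le_iff.1 (nonpos_of_le_integral_mul_self hg hg0 hφ hφ_le t ht)
  exact ⟨sub_nonpos.1 h.1, sub_nonpos.1 h.2⟩

open ComplexConjugate in
theorem norm_sub_le_integral_of_hasDerivAt_nlft {x : ℝ} {f p q : ℝ → ℂ}
    (hf : LocallyIntegrableOn f (Ici 0)) (hq : ∀ s : ℝ, 0 ≤ s → ContinuousAt q s)
    (hp : ∀ s : ℝ, 0 ≤ s →
      HasDerivAt p
        (Complex.exp (2 * Complex.I * (x : ℂ) * (s : ℂ)) * conj (f s) * conj (q s)) s)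
    {t : ℝ} (ht : 0 ≤ t) : ‖p t - p 0‖ ≤ ∫ s in 0..t, ‖f s‖ * ‖q s‖ := by
  have hIcc : uIcc 0 t ⊆ Ici 0 := by rw [uIcc_of_le ht]; exact Icc_subset_Ici_self
  have hf_int : IntervalIntegrable f volume 0 t :=
    (hf.integrableOn_compact_subset hIcc isCompact_uIcc).intervalIntegrable
  have hq_cont : ContinuousOn q (uIcc 0 t) := fun s hs =>
    (hq s (hIcc hs)).continuousWithinAt
  have hf_conj : IntervalIntegrable (fun s => conj (f s)) volume 0 t :=
    intervalIntegrable_iff.2 <|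
      (Complex.conjCLE : ℂ →L[ℝ] ℂ).integrable_comp (intervalIntegrable_iff.1 hf_int)
  have hp' : IntervalIntegrable (fun s : ℝ =>
      Complex.exp (2 * Complex.I * (x : ℂ) * (s : ℂ)) * conj (f s) * conj (q s)) volume 0 t :=
    (hf_conj.continuousOn_mul (by fun_prop)).mul_continuousOn
      (Complex.continuous_conj.comp_continuousOn hq_cont)
  rw [← intervalIntegral.integral_eq_sub_of_hasDerivAt (fun s hs => hp s (hIcc hs)) hp']
  refine intervalIntegral.norm_integral_le_of_norm_le ht (.of_forall fun s _ => le_of_eq ?_)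
    (hf_int.norm.mul_continuousOn hq_cont.norm)
  simp [Complex.norm_exp]

/-- a priori bounds for the nonlinear Fourier transform data:
`|b(t)| ≤ sinh F(t)` and `|a(t) − 1| ≤ cosh F(t) − 1` with `F(t) = ∫₀ᵗ |f|`. -/
theorem a_priori_bounds_for_nlft_data
    (x : ℝ) (f a b : ℝ → ℂ)
    (hf : LocallyIntegrableOn f (Set.Ici 0))
    (ha : ∀ t : ℝ, 0 ≤ t → HasDerivAt a
      (Complex.exp (2 * Complex.I * (x : ℂ) * (t : ℂ)) *
        (starRingEnd ℂ) (f t) * (starRingEnd ℂ) (b t)) t)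
    (hb : ∀ t : ℝ, 0 ≤ t → HasDerivAt b
      (Complex.exp (2 * Complex.I * (x : ℂ) * (t : ℂ)) *
        (starRingEnd ℂ) (f t) * (starRingEnd ℂ) (a t)) t)
    (ha0 : a 0 = 1) (hb0 : b 0 = 0) :
    ∀ t : ℝ, 0 ≤ t →
      ‖b t‖ ≤ Real.sinh (∫ s in (0:ℝ)..t, ‖f s‖) ∧
      ‖a t - 1‖ ≤ Real.cosh (∫ s in (0:ℝ)..t, ‖f s‖) - 1 := by
  intro t ht
  have hf_int : IntervalIntegrable f volume 0 t :=
    (hf.integrableOn_compact_subset (uIcc_of_le ht ▸ Icc_subset_Ici_self)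
      isCompact_uIcc).intervalIntegrable
  have ha_cont : ContinuousOn a (Icc 0 t) := fun s hs =>
    (ha s hs.1).continuousAt.continuousWithinAt
  have hb_cont : ContinuousOn b (Icc 0 t) := fun s hs =>
    (hb s hs.1).continuousAt.continuousWithinAt
  refine le_sinh_and_le_cosh_sub_one_of_le_integral hf_int.norm (fun s => norm_nonneg _)
    (ha_cont.sub continuousOn_const).norm hb_cont.norm ha_cont.norm
    (fun s => by simpa using norm_le_norm_add_norm_sub' (a s) 1) (fun s hs => ?_)
    (fun s hs => ?_) t ⟨ht, le_rfl⟩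
  · simpa [ha0] using
      norm_sub_le_integral_of_hasDerivAt_nlft hf (fun r hr => (hb r hr).continuousAt) ha hs.1
  · simpa [hb0] using
      norm_sub_le_integral_of_hasDerivAt_nlft hf (fun r hr => (ha r hr).continuousAt) hb hs.1
end
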